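/- arXiv:2311.04409 — 2 statements merged into one kernel-verified Lean document; each statement's English description precedes it below -/
import Mathlib

section
/- For every signed poset P on [n], the Jordan–Hölder set JH(P) is nonempty; that is, there exists a signed permutation ω ∈ S_n^B such that ⟨α, (ω(1),...,ω(n))⟩ ≥ 0 for all α ∈ P. -/
open Finset Pointwise

noncomputable section
attribute [local instance] Classical.propDecidable

/-- The `i`-th standard unit vector in `ℝ^n`. -/
def ee (n : ℕ) (i : Fin n) : Fin n → ℝ := fun j => if j = i then 1 else 0

/-- Standard inner product on `ℝ^n`. -/
def dot {n : ℕ} (a x : Fin n → ℝ) : ℝ := ∑ i, a i * x i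

/-- The type-B root system `B_n`. -/
def Bn (n : ℕ) : Set (Fin n → ℝ) :=
  {α | (∃ i : Fin n, α = ee n i ∨ α = -ee n i) ∨
       (∃ i j : Fin n, i < j ∧ (α = ee n i + ee n j ∨ α = -ee n i - ee n j ∨
          α = ee n i - ee n j ∨ α = -ee n i + ee n j))}

/-- The set of positive linear combinations of elements of `S`. -/
def PLC {n : ℕ} (S : Set (Fin n → ℝ)) : Set (Fin n → ℝ) :=
  {β | ∃ (m : ℕ) (c : Fin m → ℝ) (v : Fin m → (Fin n → ℝ)),
     (∀ k, 0 < c k) ∧ (∀ k, v k ∈ S) ∧ β = ∑ k, c k • v k}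

/-- A signed poset on `[n]`: a subset of `B_n` with antisymmetry, closed under
positive linear combinations within `B_n`. -/
def IsSignedPoset {n : ℕ} (P : Set (Fin n → ℝ)) : Prop :=
  P ⊆ Bn n ∧ (∀ α ∈ P, -α ∉ P) ∧ (∀ β ∈ Bn n, β ∈ PLC P → β ∈ P)

/-- The signed order cone `K_P`. -/
def orderCone {n : ℕ} (P : Set (Fin n → ℝ)) : Set (Fin n → ℝ) :=
  {x | ∀ α ∈ P, 0 ≤ dot α x}

/-- The signed order polytope `O_P = K_P ∩ [-1,1]^n`. -/
def orderPolytope {n : ℕ} (P : Set (Fin n → ℝ)) : Set (Fin n → ℝ) :=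
  {x | (∀ α ∈ P, 0 ≤ dot α x) ∧ ∀ i, -1 ≤ x i ∧ x i ≤ 1}

/-- A signed permutation on `[n]`, encoded as the underlying permutation `π`
(`π i = |ω(i)|`, zero-indexed) together with the signs (`true` means negative). -/
abbrev SignedPerm (n : ℕ) := Equiv.Perm (Fin n) × (Fin n → Bool)

/-- The sign `ε_i` of a signed permutation. -/
def sgn {n : ℕ} (σ : SignedPerm n) (i : Fin n) : ℝ := if σ.2 i then -1 else 1

/-- The signed permutation `σ` viewed as the point `(σ(1), ..., σ(n)) ∈ ℝ^n`. -/
def spt {n : ℕ} (σ : SignedPerm n) : Fin n → ℝ := fun i => sgn σ i * ((σ.1 i : ℕ) + 1)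

/-- The linear action of a signed permutation on `ℝ^n`, extending
`ω e_i = e_j` if `ω(i) = j` and `ω e_i = -e_j` if `ω(i) = -j`. -/
def sact {n : ℕ} (σ : SignedPerm n) (x : Fin n → ℝ) : Fin n → ℝ :=
  fun j => sgn σ (σ.1.symm j) * x (σ.1.symm j)

/-- The linear action of the inverse signed permutation `σ⁻¹` on `ℝ^n`. -/
def sactInv {n : ℕ} (σ : SignedPerm n) (x : Fin n → ℝ) : Fin n → ℝ :=
  fun i => sgn σ i * x (σ.1 i)

/-- The identity signed permutation. -/
def idSP (n : ℕ) : SignedPerm n := (Equiv.refl (Fin n), fun _ => false)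

/-- The Jordan–Hölder set of a signed poset. -/
def JH {n : ℕ} (P : Set (Fin n → ℝ)) : Set (SignedPerm n) :=
  {σ | ∀ α ∈ P, 0 ≤ dot α (spt σ)}

/-- The value `σ(k)` (as a real number), with the convention `σ(0) = 0`;
here `k` ranges over `0, 1, ..., n`. -/
def svalZ {n : ℕ} (σ : SignedPerm n) : ℕ → ℝ
  | 0 => 0
  | k + 1 => if h : k < n then spt σ ⟨k, h⟩ else 0

/-- The natural descent statistic `natdes(σ) = #{i ∈ {0,...,n-1} : σ(i) > σ(i+1)}`. -/
def natdes {n : ℕ} (σ : SignedPerm n) : ℕ :=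
  ((Finset.range n).filter (fun i => svalZ σ (i + 1) < svalZ σ i)).card

/-!
Since `P` is a finite subset of `B_n`, the separation theorem gives a point `x` with
`⟨α, x⟩ > 0` for all `α ∈ P` as soon as `0 ∉ conv P`; and if `0 = ∑ w_γ γ` with `w_β > 0`,
then `-β` is a nonnegative combination of `P`, so closure forces `-β ∈ P`, contradicting
antisymmetry. Now let `ω` be the signed permutation with the signs of `x` whose absolute values
are ordered like `|x_1|, …, |x_n|`. A sum `a + b` of reals is positive iff the summand of larger
absolute value is positive, or `|a| = |b|` and both are; since `ω` preserves the signs of `±x_i` and the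
comparisons `|x_i| < |x_j|`, every `α ∈ B_n` with `⟨α, x⟩ > 0` also has `⟨α, ω⟩ > 0`.
-/

variable {n : ℕ}

lemma dot_eq_dotProduct (a x : Fin n → ℝ) : dot a x = a ⬝ᵥ x := rfl

lemma ee_eq_single (i : Fin n) : ee n i = Pi.single i 1 := by
  funext j
  simp [ee, Pi.single_apply]

lemma neg_mem_Bn {α : Fin n → ℝ} (h : α ∈ Bn n) : -α ∈ Bn n := by
  rcases h with ⟨i, rfl | rfl⟩ | ⟨i, j, hij, rfl | rfl | rfl | rfl⟩
  · exact Or.inl ⟨i, Or.inr rfl⟩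
  · exact Or.inl ⟨i, Or.inl (neg_neg _)⟩
  · exact Or.inr ⟨i, j, hij, Or.inr (Or.inl (by abel))⟩
  · exact Or.inr ⟨i, j, hij, Or.inl (by abel)⟩
  · exact Or.inr ⟨i, j, hij, Or.inr (Or.inr (Or.inr (by abel)))⟩
  · exact Or.inr ⟨i, j, hij, Or.inr (Or.inr (Or.inl (by abel)))⟩

lemma Bn_subset_pi : Bn n ⊆ Set.pi Set.univ fun _ => ({-1, 0, 1} : Set ℝ) := by
  rintro α (⟨i, rfl | rfl⟩ | ⟨i, j, hij, rfl | rfl | rfl | rfl⟩) k -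
  · by_cases k = i <;> simp_all [ee]
  · by_cases k = i <;> simp_all [ee]
  all_goals by_cases hki : k = i <;> by_cases hkj : k = j <;> simp_all [ee, hij.ne]

lemma finite_Bn : (Bn n).Finite :=
  (Set.Finite.pi fun _ => Set.toFinite _).subset Bn_subset_pi

lemma sum_smul_mem_PLC {ι : Type*} {S : Set (Fin n → ℝ)} (t : Finset ι) {c : ι → ℝ}
    {v : ι → Fin n → ℝ} (hc : ∀ k ∈ t, 0 ≤ c k) (hv : ∀ k ∈ t, v k ∈ S) :
    ∑ k ∈ t, c k • v k ∈ PLC S := by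
  classical
  set t' := t.filter fun k => 0 < c k
  have ht' : ∑ k ∈ t', c k • v k = ∑ k ∈ t, c k • v k :=
    sum_filter_of_ne fun k hk hne =>
      (hc k hk).lt_of_ne' fun h0 => hne (by rw [h0, zero_smul])
  refine ⟨t'.card, fun m => c (t'.equivFin.symm m), fun m => v (t'.equivFin.symm m),
    fun m => (mem_filter.1 (t'.equivFin.symm m).2).2,
    fun m => hv _ (mem_filter.1 (t'.equivFin.symm m).2).1, ?_⟩
  rw [← ht', ← sum_coe_sort t']
  exact (t'.equivFin.symm.sum_comp fun k : t' => c k • v k).symm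

lemma IsSignedPoset.zero_notMem_convexHull {P : Set (Fin n → ℝ)} (hP : IsSignedPoset P) :
    (0 : Fin n → ℝ) ∉ convexHull ℝ P := by
  classical
  intro h0
  set s := (finite_Bn.subset hP.1).toFinset
  rw [← (finite_Bn.subset hP.1).coe_toFinset, mem_convexHull'] at h0
  obtain ⟨w, hw0, hw1, hw⟩ := h0
  obtain ⟨β, hβ, hwβ⟩ := exists_ne_zero_of_sum_ne_zero (by rw [hw1]; exact one_ne_zero)
  have hβP : β ∈ P := (Set.Finite.mem_toFinset _).1 hβ
  have hwβ_pos : 0 < w β := (hw0 β hβ).lt_of_ne' hwβ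
  have hsplit : w β • β + ∑ γ ∈ s.erase β, w γ • γ = 0 := by
    rw [add_sum_erase s (fun γ => w γ • γ) hβ, hw]
  have hneg : -β = ∑ γ ∈ s.erase β, ((w β)⁻¹ * w γ) • γ := by
    simp_rw [mul_smul, ← smul_sum, eq_neg_of_add_eq_zero_right hsplit, smul_neg, smul_smul,
      inv_mul_cancel₀ hwβ, one_smul]
  have hPLC : -β ∈ PLC P := hneg ▸ sum_smul_mem_PLC _
    (fun γ hγ => mul_nonneg (inv_nonneg.2 hwβ_pos.le) (hw0 γ (mem_of_mem_erase hγ)))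
    (fun γ hγ => (Set.Finite.mem_toFinset _).1 (mem_of_mem_erase hγ))
  exact hP.2.1 β hβP (hP.2.2 _ (neg_mem_Bn (hP.1 hβP)) hPLC)

lemma exists_dotProduct_pos_of_zero_notMem_convexHull {ι : Type*} [Fintype ι]
    {S : Set (ι → ℝ)} (hS : S.Finite) (h0 : (0 : ι → ℝ) ∉ convexHull ℝ S) :
    ∃ x : ι → ℝ, ∀ α ∈ S, 0 < α ⬝ᵥ x := by
  classical
  obtain ⟨f, u, hf0, hf⟩ := geometric_hahn_banach_point_closed (convex_convexHull ℝ S)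
    (hS.isCompact_convexHull ℝ).isClosed h0
  refine ⟨(dotProductEquiv ℝ ι).symm f.toLinearMap, fun α hα => ?_⟩
  have hfα : f α = (dotProductEquiv ℝ ι).symm f.toLinearMap ⬝ᵥ α :=
    (LinearMap.congr_fun ((dotProductEquiv ℝ ι).apply_symm_apply f.toLinearMap) α).symm
  rw [dotProduct_comm, ← hfα]
  linarith [hf α (subset_convexHull ℝ S hα), map_zero f]

lemma IsSignedPoset.exists_dot_pos {P : Set (Fin n → ℝ)} (hP : IsSignedPoset P) :
    ∃ x : Fin n → ℝ, ∀ α ∈ P, 0 < dot α x :=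
  exists_dotProduct_pos_of_zero_notMem_convexHull (finite_Bn.subset hP.1)
    hP.zero_notMem_convexHull

lemma add_pos_of_abs_lt_imp {a b A B : ℝ} (hA : 0 < a → 0 < A) (hB : 0 < b → 0 < B)
    (hab : |a| < |b| → |A| < |B|) (hba : |b| < |a| → |B| < |A|) (h : 0 < a + b) :
    0 < A + B := by
  rcases lt_trichotomy |a| |b| with hlt | heq | hgt
  · have hb : 0 < b := by
      by_contra! hb
      linarith [abs_of_nonpos hb, le_abs_self a]
    linarith [hab hlt, abs_of_pos (hB hb), neg_abs_le A]
  · have ha : 0 < a := by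
      by_contra! ha
      linarith [abs_of_nonpos ha, le_abs_self b]
    have hb : 0 < b := by
      by_contra! hb
      linarith [abs_of_nonpos hb, le_abs_self a]
    linarith [hA ha, hB hb]
  · have ha : 0 < a := by
      by_contra! ha
      linarith [abs_of_nonpos ha, le_abs_self b]
    linarith [hba hgt, abs_of_pos (hA ha), neg_abs_le B]

structure SignRankCompatible (x y : Fin n → ℝ) : Prop where
  pos : ∀ i, 0 < x i → 0 < y i
  neg : ∀ i, x i < 0 → y i < 0
  abs_lt : ∀ i j, |x i| < |x j| → |y i| < |y j|

namespace SignRankCompatible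

variable {x y : Fin n → ℝ}

lemma neg_pos (h : SignRankCompatible x y) (i : Fin n) (hi : 0 < -x i) : 0 < -y i :=
  _root_.neg_pos.2 (h.neg i (_root_.neg_pos.1 hi))

lemma dot_pos (h : SignRankCompatible x y) {α : Fin n → ℝ} (hα : α ∈ Bn n)
    (hx : 0 < dot α x) : 0 < dot α y := by
  rcases hα with ⟨i, rfl | rfl⟩ | ⟨i, j, -, rfl | rfl | rfl | rfl⟩ <;>
    simp only [dot_eq_dotProduct, ee_eq_single, add_dotProduct, neg_dotProduct,
      single_dotProduct, one_mul, sub_eq_add_neg] at hx ⊢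
  · exact h.pos i hx
  · exact h.neg_pos i hx
  all_goals
    refine add_pos_of_abs_lt_imp ?_ ?_ ?_ ?_ hx <;>
      first
      | exact h.pos _
      | exact h.neg_pos _
      | simpa only [abs_neg] using h.abs_lt _ _

end SignRankCompatible

lemma abs_spt (σ : SignedPerm n) (i : Fin n) : |spt σ i| = (σ.1 i : ℕ) + 1 := by
  have hsgn : |sgn σ i| = 1 := by unfold sgn; split_ifs <;> norm_num
  rw [spt, abs_mul, hsgn, one_mul, abs_of_pos (by positivity)]

lemma Tuple.sort_symm_lt_of_lt {α : Type*} [LinearOrder α] {f : Fin n → α} {i j : Fin n}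
    (h : f i < f j) : (Tuple.sort f).symm i < (Tuple.sort f).symm j :=
  (Tuple.monotone_sort f).reflect_lt (by simpa only [Function.comp_apply, Equiv.apply_symm_apply])

def SignedPerm.ofPoint (x : Fin n → ℝ) : SignedPerm n :=
  ((Tuple.sort fun i => |x i|).symm, fun i => decide (x i < 0))

lemma signRankCompatible_ofPoint (x : Fin n → ℝ) :
    SignRankCompatible x (spt (SignedPerm.ofPoint x)) where
  pos i hi := by
    simp only [spt, sgn, SignedPerm.ofPoint, decide_eq_true_eq, not_lt.2 hi.le, if_false, one_mul]
    positivity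
  neg i hi := by
    simp only [spt, sgn, SignedPerm.ofPoint, decide_eq_true_eq, hi, if_true, neg_one_mul,
      Left.neg_neg_iff]
    positivity
  abs_lt i j hij := by
    rw [abs_spt, abs_spt, add_lt_add_iff_right, Nat.cast_lt]
    exact Tuple.sort_symm_lt_of_lt hij

/-- the Jordan–Hölder set of any signed poset is nonempty. -/
theorem stmt4 {n : ℕ} (P : Set (Fin n → ℝ)) (hP : IsSignedPoset P) :
    ∃ σ : SignedPerm n, σ ∈ JH P := by
  obtain ⟨x, hx⟩ := hP.exists_dot_pos
  exact ⟨SignedPerm.ofPoint x, fun α hα =>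
    ((signRankCompatible_ofPoint x).dot_pos (hP.1 hα) (hx α hα)).le⟩
end
end

section
/- A finite poset Q on the ground set [-n, n] = {-n, ..., -1, 0, 1, ..., n} is the Fischer representation Ĝ(P) of some signed poset P on [n] if and only if: (1) i <_Q j if and only if -j <_Q -i for all i, j ∈ [-n,n]; and (2) if -i <_Q i then -i <_Q 0 <_Q i, for all i ∈ [-n,n]. -/
open Finset Pointwise

noncomputable section
attribute [local instance] Classical.propDecidable

/-- The element `i ∈ [n]` viewed as the integer `i + 1 ∈ {1, ..., n}`. -/
def iota {n : ℕ} (i : Fin n) : ℤ := (i : ℕ) + 1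

/-- The generating relations of the Fischer representation `Ĝ(P)` on `[-n, n]`. -/
def fischerGen {n : ℕ} (P : Set (Fin n → ℝ)) : ℤ → ℤ → Prop := fun a b =>
  (∃ i j : Fin n, ee n j - ee n i ∈ P ∧
     ((a = iota i ∧ b = iota j) ∨ (a = -iota j ∧ b = -iota i))) ∨
  (∃ i j : Fin n, -ee n i - ee n j ∈ P ∧
     ((a = iota i ∧ b = -iota j) ∨ (a = iota j ∧ b = -iota i))) ∨
  (∃ i j : Fin n, ee n i + ee n j ∈ P ∧
     ((a = -iota i ∧ b = iota j) ∨ (a = -iota j ∧ b = iota i))) ∨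
  (∃ i : Fin n, -ee n i ∈ P ∧ ((a = iota i ∧ b = 0) ∨ (a = 0 ∧ b = -iota i))) ∨
  (∃ i : Fin n, ee n i ∈ P ∧ ((a = -iota i ∧ b = 0) ∨ (a = 0 ∧ b = iota i)))

/-- The strict order relation of the Fischer representation `Ĝ(P)`:
the transitive closure of the generating relations. -/
def flt {n : ℕ} (P : Set (Fin n → ℝ)) : ℤ → ℤ → Prop :=
  Relation.TransGen (fischerGen P)

/-- `c 0 < c 1 < ... < c m` is a maximal chain of the poset on `[-n, n]` with strict
order `lt`: it is a chain, saturated, and cannot be extended below or above. -/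
def IsMaxChainOn (n : ℕ) (lt : ℤ → ℤ → Prop) (c : ℕ → ℤ) (m : ℕ) : Prop :=
  (∀ k ≤ m, (c k).natAbs ≤ n) ∧ (∀ k < m, lt (c k) (c (k + 1))) ∧
  (∀ a : ℤ, a.natAbs ≤ n → ¬ lt a (c 0)) ∧
  (∀ a : ℤ, a.natAbs ≤ n → ¬ lt (c m) a) ∧
  (∀ k < m, ∀ a : ℤ, a.natAbs ≤ n → ¬ (lt (c k) a ∧ lt a (c (k + 1))))

/-- The Fischer representation `Ĝ(P)` is graded: all maximal chains have the same length. -/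
def FischerGraded (n : ℕ) (P : Set (Fin n → ℝ)) : Prop :=
  ∀ c m c' m', IsMaxChainOn n (flt P) c m → IsMaxChainOn n (flt P) c' m' → m = m'

/-- `b` covers `a` in the poset on `[-n, n]` with strict order `lt`. -/
def fCovBy (n : ℕ) (lt : ℤ → ℤ → Prop) (a b : ℤ) : Prop :=
  lt a b ∧ ∀ x : ℤ, x.natAbs ≤ n → ¬ (lt a x ∧ lt x b)

/-!
Write `e_a` for `a ∈ [-n, n]`, with `e_{-i} = -e_i` and `e_0 = 0`. Then `(a, b)` is a generating
pair of `Ĝ(P)` exactly when `e_b - e_a ∈ P`, a description invariant under `(a, b) ↦ (-b, -a)`;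
this gives (1). If `-a < a` in `Ĝ(P)`, telescoping along a chain shows that
`2 e_a` is a positive combination of `P`, so the root `e_a` lies in `P` and `-a < 0 < a`.

Conversely, given `Q`, take `P = {e_b - e_a ∈ B_n : a <_Q b}`. An odd `Q`-monotone `g : ℤ → ℝ`
gives the point `(g 1, …, g n)` of the order cone of `P`, where `e_b - e_a` takes the value
`g b - g a`. If `a ≠ b` and `a ≮_Q b`, such a `g` with `g b < g a` comes from the up-set of `a`
or from the down-set of `b`, and (2) guarantees that one of them is disjoint from its negative.
Hence `e_b - e_a ∈ PLC P` forces `a <_Q b`, which shows both that `P` is a signed poset and that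
`Ĝ(P) = Q`.
-/

lemma iota_pos {n : ℕ} (i : Fin n) : 0 < iota i := by
  simp only [iota]; omega

lemma iota_injective {n : ℕ} : Function.Injective (iota (n := n)) := fun i j h => by
  simp only [iota, add_left_inj, Nat.cast_inj] at h
  exact Fin.ext h

lemma natAbs_iota_le {n : ℕ} (i : Fin n) : (iota i).natAbs ≤ n := by
  have := i.isLt
  simp only [iota]; omega

lemma eq_zero_or_iota_or_neg_iota {n : ℕ} {a : ℤ} (ha : a.natAbs ≤ n) :
    a = 0 ∨ ∃ i : Fin n, a = iota i ∨ a = -iota i := by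
  rcases lt_trichotomy a 0 with h | h | h
  · exact Or.inr ⟨⟨(-a).toNat - 1, by omega⟩, Or.inr (by simp only [iota]; omega)⟩
  · exact Or.inl h
  · exact Or.inr ⟨⟨a.toNat - 1, by omega⟩, Or.inl (by simp only [iota]; omega)⟩

/-- `e_a`, with `e_{-i} = -e_i`, `e_0 = 0`, and `e_a = 0` for `a ∉ [-n, n]`. -/
def signedUnit (n : ℕ) (a : ℤ) : Fin n → ℝ :=
  fun j => if a = iota j then 1 else if a = -iota j then -1 else 0

@[simp]
lemma signedUnit_zero {n : ℕ} : signedUnit n 0 = 0 := by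
  funext j
  have := iota_pos j
  simp only [signedUnit, Pi.zero_apply]
  split_ifs <;> first | rfl | omega

@[simp]
lemma signedUnit_neg {n : ℕ} (a : ℤ) : signedUnit n (-a) = -signedUnit n a := by
  funext j
  have := iota_pos j
  simp only [signedUnit, Pi.neg_apply]
  split_ifs <;> first | omega | norm_num

@[simp]
lemma signedUnit_iota {n : ℕ} (i : Fin n) : signedUnit n (iota i) = ee n i := by
  funext j
  have := iota_pos i
  have := iota_pos j
  by_cases h : j = i
  · simp [signedUnit, ee, h]
  · simp [signedUnit, ee, h, iota_injective.ne (Ne.symm h)]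
    omega

lemma dot_ee {n : ℕ} (i : Fin n) (x : Fin n → ℝ) : dot (ee n i) x = x i := by
  simp [dot, ee]

lemma dot_signedUnit {n : ℕ} {g : ℤ → ℝ} (hg : ∀ z, g (-z) = -g z) {a : ℤ}
    (ha : a.natAbs ≤ n) : dot (signedUnit n a) (fun i => g (iota i)) = g a := by
  rcases eq_zero_or_iota_or_neg_iota ha with rfl | ⟨i, rfl | rfl⟩
  · have := hg 0
    rw [neg_zero] at this
    simp [dot]
    linarith
  · rw [signedUnit_iota, dot_ee]
  · simp [dot, ee, hg]

lemma ee_sub_ee_mem_Bn {n : ℕ} {i j : Fin n} (h : i ≠ j) : ee n j - ee n i ∈ Bn n := by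
  rcases h.lt_or_gt with h | h
  · exact Or.inr ⟨i, j, h, Or.inr (Or.inr (Or.inr (by abel)))⟩
  · exact Or.inr ⟨j, i, h, Or.inr (Or.inr (Or.inl rfl))⟩

lemma ee_add_ee_mem_Bn {n : ℕ} {i j : Fin n} (h : i ≠ j) : ee n i + ee n j ∈ Bn n := by
  rcases h.lt_or_gt with h | h
  · exact Or.inr ⟨i, j, h, Or.inl rfl⟩
  · exact Or.inr ⟨j, i, h, Or.inl (by abel)⟩

lemma neg_ee_sub_ee_mem_Bn {n : ℕ} {i j : Fin n} (h : i ≠ j) : -ee n i - ee n j ∈ Bn n := by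
  rcases h.lt_or_gt with h | h
  · exact Or.inr ⟨i, j, h, Or.inr (Or.inl rfl)⟩
  · exact Or.inr ⟨j, i, h, Or.inr (Or.inl (by abel))⟩

lemma ne_zero_of_mem_Bn {n : ℕ} {β : Fin n → ℝ} (hβ : β ∈ Bn n) : β ≠ 0 := by
  intro h0
  rcases hβ with ⟨i, rfl | rfl⟩ | ⟨i, j, hij, rfl | rfl | rfl | rfl⟩
  any_goals simpa [ee] using congrFun h0 i
  all_goals simpa [ee, hij.ne] using congrFun h0 i

lemma mem_Bn_iff {n : ℕ} {β : Fin n → ℝ} : β ∈ Bn n ↔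
    ∃ a b : ℤ, a.natAbs ≤ n ∧ b.natAbs ≤ n ∧ a ≠ b ∧ a ≠ -b ∧
      signedUnit n b - signedUnit n a = β := by
  constructor
  · rintro (⟨i, rfl | rfl⟩ | ⟨i, j, hij, rfl | rfl | rfl | rfl⟩)
    all_goals
      have := iota_pos i
      try have := iota_pos j
      try have := iota_injective.ne hij.ne
    · exact ⟨0, iota i, by simp, natAbs_iota_le i, by omega, by omega, by simp⟩
    · exact ⟨iota i, 0, natAbs_iota_le i, by simp, by omega, by omega, by simp⟩
    · exact ⟨-iota i, iota j, by simp [natAbs_iota_le], natAbs_iota_le j, by omega, by omega,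
        by simp [add_comm]⟩
    · exact ⟨iota i, -iota j, natAbs_iota_le i, by simp [natAbs_iota_le], by omega, by omega,
        by simp; abel⟩
    · exact ⟨iota j, iota i, natAbs_iota_le j, natAbs_iota_le i, by omega, by omega, by simp⟩
    · exact ⟨iota i, iota j, natAbs_iota_le i, natAbs_iota_le j, by omega, by omega,
        by simp; abel⟩
  · rintro ⟨a, b, ha, hb, hab, hab', rfl⟩
    rcases eq_zero_or_iota_or_neg_iota ha with rfl | ⟨i, rfl | rfl⟩ <;>
      rcases eq_zero_or_iota_or_neg_iota hb with rfl | ⟨j, rfl | rfl⟩ <;>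
      simp only [signedUnit_zero, signedUnit_neg, signedUnit_iota, sub_zero, zero_sub,
        sub_neg_eq_add, zero_add, neg_neg, neg_add_eq_sub, ne_eq, neg_inj, iota_injective.eq_iff]
        at hab hab' ⊢
    all_goals first
      | exact absurd trivial hab
      | exact Or.inl ⟨_, Or.inl rfl⟩
      | exact Or.inl ⟨_, Or.inr rfl⟩
      | exact ee_sub_ee_mem_Bn ‹¬i = j›
      | exact ee_sub_ee_mem_Bn (Ne.symm ‹¬i = j›)
      | exact neg_ee_sub_ee_mem_Bn (Ne.symm ‹¬i = j›)
      | exact ee_add_ee_mem_Bn (Ne.symm ‹¬i = j›)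

lemma subset_PLC {n : ℕ} (S : Set (Fin n → ℝ)) : S ⊆ PLC S := fun α h =>
  ⟨1, fun _ => 1, fun _ => α, fun _ => one_pos, fun _ => h, by simp⟩

lemma add_mem_PLC {n : ℕ} {S : Set (Fin n → ℝ)} {β γ : Fin n → ℝ}
    (hβ : β ∈ PLC S) (hγ : γ ∈ PLC S) : β + γ ∈ PLC S := by
  obtain ⟨m₁, c₁, v₁, hc₁, hv₁, rfl⟩ := hβ
  obtain ⟨m₂, c₂, v₂, hc₂, hv₂, rfl⟩ := hγ
  refine ⟨m₁ + m₂, Fin.append c₁ c₂, Fin.append v₁ v₂, ?_, ?_, ?_⟩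
  · exact Fin.addCases (by simpa using hc₁) (by simpa using hc₂)
  · exact Fin.addCases (by simpa using hv₁) (by simpa using hv₂)
  · simp [Fin.sum_univ_add]

lemma smul_mem_PLC {n : ℕ} {S : Set (Fin n → ℝ)} {β : Fin n → ℝ} {t : ℝ}
    (ht : 0 < t) (hβ : β ∈ PLC S) : t • β ∈ PLC S := by
  obtain ⟨m, c, v, hc, hv, rfl⟩ := hβ
  exact ⟨m, fun k => t * c k, v, fun k => mul_pos ht (hc k), hv,
    by simp [Finset.smul_sum, smul_smul]⟩

lemma dot_nonneg_of_mem_PLC {n : ℕ} {S : Set (Fin n → ℝ)} {x β : Fin n → ℝ}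
    (hx : x ∈ orderCone S) (hβ : β ∈ PLC S) : 0 ≤ dot β x := by
  obtain ⟨m, c, v, hc, hv, rfl⟩ := hβ
  change 0 ≤ (∑ k, c k • v k) ⬝ᵥ x
  rw [sum_dotProduct]
  exact Finset.sum_nonneg fun k _ => by
    rw [smul_dotProduct, smul_eq_mul]
    exact mul_nonneg (hc k).le (hx _ (hv k))

/-- `fischerGen` allows `i = j`, so no condition `a ≠ ±b` appears here. -/
lemma fischerGen_iff {n : ℕ} {P : Set (Fin n → ℝ)} {a b : ℤ} :
    fischerGen P a b ↔ a.natAbs ≤ n ∧ b.natAbs ≤ n ∧ (a ≠ 0 ∨ b ≠ 0) ∧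
      signedUnit n b - signedUnit n a ∈ P := by
  constructor
  · rintro (⟨i, j, hP, ⟨rfl, rfl⟩ | ⟨rfl, rfl⟩⟩ | ⟨i, j, hP, ⟨rfl, rfl⟩ | ⟨rfl, rfl⟩⟩ |
      ⟨i, j, hP, ⟨rfl, rfl⟩ | ⟨rfl, rfl⟩⟩ | ⟨i, hP, ⟨rfl, rfl⟩ | ⟨rfl, rfl⟩⟩ |
      ⟨i, hP, ⟨rfl, rfl⟩ | ⟨rfl, rfl⟩⟩)
    all_goals
      have := iota_pos i
      refine ⟨by simp [natAbs_iota_le], by simp [natAbs_iota_le], by omega, ?_⟩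
      simp only [signedUnit_zero, signedUnit_neg, signedUnit_iota]
      convert hP using 1 <;> abel
  · rintro ⟨ha, hb, hab, hP⟩
    rcases eq_zero_or_iota_or_neg_iota ha with rfl | ⟨i, rfl | rfl⟩ <;>
      rcases eq_zero_or_iota_or_neg_iota hb with rfl | ⟨j, rfl | rfl⟩ <;>
      simp only [signedUnit_zero, signedUnit_neg, signedUnit_iota] at hP
    all_goals first
      | exact Or.inl ⟨_, _, hP, Or.inl ⟨rfl, rfl⟩⟩
      | exact Or.inl ⟨_, _, by convert hP using 1; abel, Or.inr ⟨rfl, rfl⟩⟩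
      | exact Or.inr (Or.inl ⟨_, _, by convert hP using 1; abel, Or.inl ⟨rfl, rfl⟩⟩)
      | exact Or.inr (Or.inr (Or.inl ⟨_, _, by convert hP using 1; abel, Or.inl ⟨rfl, rfl⟩⟩))
      | exact Or.inr (Or.inr (Or.inr (Or.inl ⟨_, by simpa using hP, Or.inl ⟨rfl, rfl⟩⟩)))
      | exact Or.inr (Or.inr (Or.inr (Or.inl ⟨_, by simpa using hP, Or.inr ⟨rfl, rfl⟩⟩)))
      | exact Or.inr (Or.inr (Or.inr (Or.inr ⟨_, by simpa using hP, Or.inl ⟨rfl, rfl⟩⟩)))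
      | exact Or.inr (Or.inr (Or.inr (Or.inr ⟨_, by simpa using hP, Or.inr ⟨rfl, rfl⟩⟩)))
      | simp at hab

lemma fischerGen_neg {n : ℕ} {P : Set (Fin n → ℝ)} {a b : ℤ} (h : fischerGen P a b) :
    fischerGen P (-b) (-a) := by
  obtain ⟨ha, hb, hab, hP⟩ := fischerGen_iff.mp h
  refine fischerGen_iff.mpr ⟨by simpa, by simpa, by omega, ?_⟩
  rwa [signedUnit_neg, signedUnit_neg, neg_sub_neg]

lemma flt_neg {n : ℕ} {P : Set (Fin n → ℝ)} {a b : ℤ} (h : flt P a b) : flt P (-b) (-a) := by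
  induction h with
  | single h => exact .single (fischerGen_neg h)
  | tail _ h ih => exact .head (fischerGen_neg h) ih

lemma natAbs_le_of_flt {n : ℕ} {P : Set (Fin n → ℝ)} {a b : ℤ} (h : flt P a b) :
    b.natAbs ≤ n := by
  obtain ⟨c, -, hc⟩ := Relation.TransGen.tail'_iff.mp h
  exact (fischerGen_iff.mp hc).2.1

lemma signedUnit_sub_mem_PLC_of_flt {n : ℕ} {P : Set (Fin n → ℝ)} {a b : ℤ}
    (h : flt P a b) : signedUnit n b - signedUnit n a ∈ PLC P := by
  induction h with
  | single h => exact subset_PLC P (fischerGen_iff.mp h).2.2.2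
  | tail _ h ih =>
    convert add_mem_PLC ih (subset_PLC P (fischerGen_iff.mp h).2.2.2) using 1
    abel

lemma flt_neg_zero_and_flt_zero {n : ℕ} {P : Set (Fin n → ℝ)} (hP : IsSignedPoset P) {a : ℤ}
    (ha : a ≠ 0) (h : flt P (-a) a) : flt P (-a) 0 ∧ flt P 0 a := by
  have hn := natAbs_le_of_flt h
  have hPLC : (2 : ℝ) • signedUnit n a ∈ PLC P := by
    simpa [two_smul] using signedUnit_sub_mem_PLC_of_flt h
  have hmem : signedUnit n a ∈ P := by
    refine hP.2.2 _ (mem_Bn_iff.mpr ⟨0, a, by simp, hn, Ne.symm ha,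
      by simpa using ha, by simp⟩) ?_
    simpa [smul_smul] using smul_mem_PLC (by norm_num : (0 : ℝ) < 2⁻¹) hPLC
  exact ⟨.single (fischerGen_iff.mpr ⟨by simpa, by simp, by simpa, by simpa⟩),
    .single (fischerGen_iff.mpr ⟨by simp, hn, Or.inr ha, by simpa⟩)⟩

/-- `g = 1_U - 1_{-U}` for the up-set `U` of `a`. -/
lemma exists_odd_monotone_lt_of_upperSet {r : ℤ → ℤ → Prop}
    (htrans : ∀ a b c, r a b → r b c → r a c) (hneg : ∀ a b, r a b → r (-b) (-a))
    {a b : ℤ} (hab : a ≠ b) (hnr : ¬ r a b) (ha : -a ≠ a) (hna : ¬ r a (-a)) :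
    ∃ g : ℤ → ℝ, (∀ z, g (-z) = -g z) ∧ (∀ u v, r u v → g u ≤ g v) ∧ g b < g a := by
  let χ : ℤ → ℝ := fun z => if z = a ∨ r a z then 1 else 0
  have hup : ∀ u v, r u v → u = a ∨ r a u → v = a ∨ r a v := by
    rintro u v huv (rfl | hu)
    exacts [Or.inr huv, Or.inr (htrans _ _ _ hu huv)]
  have hχ : ∀ u v, r u v → χ u ≤ χ v := fun u v huv => by
    simp only [χ]
    split_ifs with hu hv <;> first | exact absurd (hup u v huv hu) hv | norm_num
  refine ⟨fun z => χ z - χ (-z), fun z => by simp, fun u v huv =>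
    sub_le_sub (hχ u v huv) (hχ _ _ (hneg u v huv)), ?_⟩
  have hχa : χ a = 1 := if_pos (Or.inl rfl)
  have hχna : χ (-a) = 0 := if_neg (by rintro (h | h); exacts [ha h, hna h])
  have hχb : χ b = 0 := if_neg (by rintro (h | h); exacts [hab h.symm, hnr h])
  have hχnb : 0 ≤ χ (-b) := by simp only [χ]; split_ifs <;> norm_num
  show χ b - χ (-b) < χ a - χ (-a)
  linarith

lemma exists_odd_monotone_lt {r : ℤ → ℤ → Prop}
    (htrans : ∀ a b c, r a b → r b c → r a c) (hneg : ∀ a b, r a b → r (-b) (-a))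
    (hmid : ∀ a, r (-a) a → r (-a) 0 ∧ r 0 a) {a b : ℤ} (hab : a ≠ b) (hnr : ¬ r a b) :
    ∃ g : ℤ → ℝ, (∀ z, g (-z) = -g z) ∧ (∀ u v, r u v → g u ≤ g v) ∧ g b < g a := by
  by_cases ha : -a ≠ a ∧ ¬ r a (-a)
  · exact exists_odd_monotone_lt_of_upperSet htrans hneg hab hnr ha.1 ha.2
  have ha0 : a = 0 ∨ r a 0 := by
    rcases not_and_or.mp ha with ha | ha
    · exact Or.inl (by omega)
    · exact Or.inr (by simpa using (hmid (-a) (by rw [neg_neg]; exact not_not.mp ha)).1)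
  have hb : -b ≠ b ∧ ¬ r (-b) b := by
    refine not_or.mp fun hb => ?_
    have hb0 : 0 = b ∨ r 0 b := hb.imp (by omega) fun h => (hmid b h).2
    rcases ha0 with rfl | ha0 <;> rcases hb0 with rfl | hb0
    exacts [hab rfl, hnr hb0, hnr ha0, hnr (htrans _ _ _ ha0 hb0)]
  -- the down-set of `b`: the previous lemma for the reversed order
  obtain ⟨g, hodd, hmono, hlt⟩ := exists_odd_monotone_lt_of_upperSet (r := fun u v => r v u)
    (fun _ _ _ h₁ h₂ => htrans _ _ _ h₂ h₁) (fun _ _ h => hneg _ _ h) hab.symm hnr hb.1 hb.2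
  exact ⟨-g, by simp [hodd], fun u v h => neg_le_neg (hmono v u h), neg_lt_neg hlt⟩

lemma dot_signedUnit_sub {n : ℕ} {g : ℤ → ℝ} (hg : ∀ z, g (-z) = -g z) {a b : ℤ}
    (ha : a.natAbs ≤ n) (hb : b.natAbs ≤ n) :
    dot (signedUnit n b - signedUnit n a) (fun i => g (iota i)) = g b - g a := by
  change (_ - _) ⬝ᵥ _ = _
  rw [sub_dotProduct]
  exact congr_arg₂ _ (dot_signedUnit hg hb) (dot_signedUnit hg ha)

def signedPosetOf (n : ℕ) (r : ℤ → ℤ → Prop) : Set (Fin n → ℝ) :=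
  {α | α ∈ Bn n ∧ ∃ a b, r a b ∧ signedUnit n b - signedUnit n a = α}

lemma mem_orderCone_signedPosetOf {n : ℕ} {r : ℤ → ℤ → Prop}
    (hsupp : ∀ a b, r a b → a.natAbs ≤ n ∧ b.natAbs ≤ n) {g : ℤ → ℝ}
    (hodd : ∀ z, g (-z) = -g z) (hmono : ∀ u v, r u v → g u ≤ g v) :
    (fun i => g (iota i)) ∈ orderCone (signedPosetOf n r) := by
  rintro _ ⟨-, u, v, huv, rfl⟩
  rw [dot_signedUnit_sub hodd (hsupp u v huv).1 (hsupp u v huv).2, sub_nonneg]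
  exact hmono u v huv

lemma rel_of_signedUnit_sub_mem_PLC {n : ℕ} {r : ℤ → ℤ → Prop}
    (hsupp : ∀ a b, r a b → a.natAbs ≤ n ∧ b.natAbs ≤ n)
    (htrans : ∀ a b c, r a b → r b c → r a c) (hneg : ∀ a b, r a b → r (-b) (-a))
    (hmid : ∀ a, r (-a) a → r (-a) 0 ∧ r 0 a) {a b : ℤ}
    (ha : a.natAbs ≤ n) (hb : b.natAbs ≤ n) (hab : a ≠ b)
    (h : signedUnit n b - signedUnit n a ∈ PLC (signedPosetOf n r)) : r a b := by
  by_contra hnr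
  obtain ⟨g, hodd, hmono, hlt⟩ := exists_odd_monotone_lt htrans hneg hmid hab hnr
  have := dot_nonneg_of_mem_PLC (mem_orderCone_signedPosetOf hsupp hodd hmono) h
  rw [dot_signedUnit_sub hodd ha hb] at this
  linarith

lemma isSignedPoset_signedPosetOf {n : ℕ} {r : ℤ → ℤ → Prop}
    (hsupp : ∀ a b, r a b → a.natAbs ≤ n ∧ b.natAbs ≤ n) (hirr : ∀ a, ¬ r a a)
    (htrans : ∀ a b c, r a b → r b c → r a c) (hneg : ∀ a b, r a b → r (-b) (-a))
    (hmid : ∀ a, r (-a) a → r (-a) 0 ∧ r 0 a) : IsSignedPoset (signedPosetOf n r) := by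
  refine ⟨fun α h => h.1, ?_, ?_⟩
  · rintro _ ⟨-, a, b, hab, rfl⟩ hba
    rw [neg_sub] at hba
    obtain ⟨ha, hb⟩ := hsupp a b hab
    have hba' := rel_of_signedUnit_sub_mem_PLC hsupp htrans hneg hmid hb ha
      (fun h => hirr a (h ▸ hab)) (subset_PLC _ hba)
    exact hirr a (htrans _ _ _ hab hba')
  · intro β hβ hPLC
    obtain ⟨a, b, ha, hb, hab, -, rfl⟩ := mem_Bn_iff.mp hβ
    exact ⟨hβ, a, b, rel_of_signedUnit_sub_mem_PLC hsupp htrans hneg hmid ha hb hab hPLC, rfl⟩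

lemma flt_signedPosetOf_iff {n : ℕ} {r : ℤ → ℤ → Prop}
    (hsupp : ∀ a b, r a b → a.natAbs ≤ n ∧ b.natAbs ≤ n) (hirr : ∀ a, ¬ r a a)
    (htrans : ∀ a b c, r a b → r b c → r a c) (hneg : ∀ a b, r a b → r (-b) (-a))
    (hmid : ∀ a, r (-a) a → r (-a) 0 ∧ r 0 a) {a b : ℤ} :
    flt (signedPosetOf n r) a b ↔ r a b := by
  have rel_of_gen : ∀ {a b}, fischerGen (signedPosetOf n r) a b → r a b := fun h => by
    obtain ⟨ha, hb, -, hP⟩ := fischerGen_iff.mp h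
    refine rel_of_signedUnit_sub_mem_PLC hsupp htrans hneg hmid ha hb ?_ (subset_PLC _ hP)
    rintro rfl
    exact ne_zero_of_mem_Bn hP.1 (sub_self _)
  have gen_of_rel : ∀ {a b}, r a b → b ≠ -a → fischerGen (signedPosetOf n r) a b := by
    intro a b h hba
    obtain ⟨ha, hb⟩ := hsupp a b h
    have hab : a ≠ b := fun e => hirr a (e ▸ h)
    exact fischerGen_iff.mpr ⟨ha, hb, by omega,
      mem_Bn_iff.mpr ⟨a, b, ha, hb, hab, by omega, rfl⟩, a, b, h, rfl⟩
  constructor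
  · intro h
    induction h with
    | single h => exact rel_of_gen h
    | tail _ h ih => exact htrans _ _ _ ih (rel_of_gen h)
  · intro h
    by_cases hba : b = -a
    · subst hba
      have ha : a ≠ 0 := by rintro rfl; exact hirr 0 h
      obtain ⟨h₁, h₂⟩ := hmid (-a) (by rwa [neg_neg])
      rw [neg_neg] at h₁
      exact .trans (.single (gen_of_rel h₁ (by simpa using ha)))
        (.single (gen_of_rel h₂ (by simpa using ha)))
    · exact .single (gen_of_rel h hba)

/-- a (strict) partial order `r` on `[-n, n]` is the Fischer
representation of some signed poset on `[n]` iff `i < j ⟺ -j < -i` and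
`-i < i ⟹ -i < 0 < i`. -/
theorem stmt14 (n : ℕ) (r : ℤ → ℤ → Prop)
    (hsupp : ∀ a b, r a b → a.natAbs ≤ n ∧ b.natAbs ≤ n)
    (hirr : ∀ a, ¬ r a a)
    (htrans : ∀ a b c, r a b → r b c → r a c) :
    (∃ P : Set (Fin n → ℝ), IsSignedPoset P ∧ ∀ a b, r a b ↔ flt P a b) ↔
    ((∀ a b : ℤ, a.natAbs ≤ n → b.natAbs ≤ n → (r a b ↔ r (-b) (-a))) ∧
     (∀ a : ℤ, a.natAbs ≤ n → r (-a) a → r (-a) 0 ∧ r 0 a)) := by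
  constructor
  · rintro ⟨P, hP, hr⟩
    obtain rfl : r = flt P := funext₂ fun a b => propext (hr a b)
    refine ⟨fun a b _ _ => ⟨flt_neg, fun h => by simpa using flt_neg h⟩, fun a _ h => ?_⟩
    exact flt_neg_zero_and_flt_zero hP (by rintro rfl; exact hirr 0 (by simpa using h)) h
  · rintro ⟨hsym, hmid⟩
    have hneg : ∀ a b, r a b → r (-b) (-a) := fun a b h =>
      (hsym a b (hsupp a b h).1 (hsupp a b h).2).mp h
    have hmid' : ∀ a, r (-a) a → r (-a) 0 ∧ r 0 a := fun a h => hmid a (hsupp _ _ h).2 h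
    exact ⟨signedPosetOf n r, isSignedPoset_signedPosetOf hsupp hirr htrans hneg hmid',
      fun a b => (flt_signedPosetOf_iff hsupp hirr htrans hneg hmid').symm⟩
end
end
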